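/- For every integer k ≥ 1, every 2k²-strong digraph D contains a (k,k)-path system. -/

import Mathlib

open Classical

section Defs

variable {V : Type}

/-- A directed walk (nonempty list of vertices, consecutive vertices joined by arcs)
staying inside the vertex set `S`, going from `u` to `v`. -/
def WalkIn (D : V → V → Prop) (S : Set V) (u v : V) : Prop :=
  ∃ w : List V, w ≠ [] ∧ w.Chain' D ∧ (∀ x ∈ w, x ∈ S) ∧
    w.head? = some u ∧ w.getLast? = some v

/-- The sub-digraph induced by `S` is strongly connected. -/
def IsStrongSet (D : V → V → Prop) (S : Set V) : Prop :=
  ∀ u ∈ S, ∀ v ∈ S, WalkIn D S u v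

/-- A digraph is `k`-strong if it has at least `k+1` vertices and deleting any
set of fewer than `k` vertices leaves it strongly connected. -/
def IsKStrong [Fintype V] (D : V → V → Prop) (k : ℕ) : Prop :=
  k + 1 ≤ Fintype.card V ∧
    ∀ S : Finset V, S.card < k → IsStrongSet D {v | v ∉ (S : Set V)}

/-- A directed path, represented as a nonempty list of distinct vertices with an arc
between consecutive vertices. -/
def IsPathList (D : V → V → Prop) (p : List V) : Prop :=
  p ≠ [] ∧ p.Nodup ∧ p.Chain' D

/-- A directed path from `u` to `v`. -/
def IsPathFromTo (D : V → V → Prop) (u v : V) (p : List V) : Prop :=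
  IsPathList D p ∧ p.head? = some u ∧ p.getLast? = some v

/-- A bramble with `m` bags in the digraph `D`: each bag is a nonempty set of vertices
inducing a strongly connected subdigraph, and any two bags either intersect or are
joined by arcs in both directions. -/
structure Bramble (D : V → V → Prop) (m : ℕ) where
  bag : Fin m → Set V
  nonempty : ∀ i, (bag i).Nonempty
  strong : ∀ i, IsStrongSet D (bag i)
  touch : ∀ i j : Fin m, (bag i ∩ bag j).Nonempty ∨
    ((∃ x ∈ bag i, ∃ y ∈ bag j, D x y) ∧ (∃ x ∈ bag j, ∃ y ∈ bag i, D x y))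

/-- A bramble has congestion (at most) `c` if every vertex lies in at most `c` bags. -/
def Bramble.HasCongestion {D : V → V → Prop} {m : ℕ} (B : Bramble D m) (c : ℕ) : Prop :=
  ∀ v : V, Nat.card {i : Fin m // v ∈ B.bag i} ≤ c

/-- `D` is `(k,c)`-linked: for every two disjoint ordered `k`-sets `s`, `t` of vertices
there are paths `P i` from `s i` to `t i` such that each vertex lies on at most `c`
of the paths. -/
def KCLinked (D : V → V → Prop) (k c : ℕ) : Prop :=
  ∀ s t : Fin k → V, Function.Injective s → Function.Injective t →
    (∀ i j : Fin k, s i ≠ t j) →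
    ∃ P : Fin k → List V,
      (∀ i, IsPathFromTo D (s i) (t i) (P i)) ∧
      ∀ v : V, Nat.card {i : Fin k // v ∈ P i} ≤ c

/-- An `(A,B)`-linkage of size `n`: `n` pairwise vertex-disjoint directed paths,
each starting in `A` and ending in `B`. -/
def IsLinkage (D : V → V → Prop) (A B : Set V) {n : ℕ} (L : Fin n → List V) : Prop :=
  (∀ i, ∃ u ∈ A, ∃ v ∈ B, IsPathFromTo D u v (L i)) ∧
    ∀ i j : Fin n, i ≠ j → ∀ x, x ∈ L i → x ∉ L j

/-- `A` is well-linked in `D`. -/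
def WellLinked (D : V → V → Prop) (A : Finset V) : Prop :=
  ∀ X Y : Finset V, X ⊆ A → Y ⊆ A → Disjoint X Y → X.card = Y.card →
    ∃ L : Fin X.card → List V, IsLinkage D (↑X) (↑Y) L

/-- An `(a,b)`-path system in `D`. -/
structure PathSystem [DecidableEq V] (D : V → V → Prop) (a b : ℕ) where
  Ain : Fin a → Finset V
  Aout : Fin a → Finset V
  Ain_card : ∀ i, (Ain i).card = b
  Aout_card : ∀ i, (Aout i).card = b
  Ain_wl : ∀ i, WellLinked D (Ain i)
  Aout_wl : ∀ i, WellLinked D (Aout i)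
  L : Fin a → Fin a → Fin b → List V
  L_linkage : ∀ i j : Fin a, i ≠ j → IsLinkage D (↑(Aout i)) (↑(Ain j)) (L i j)
  P : Fin a → List V
  P_path : ∀ i, IsPathList D (P i)
  P_disj : ∀ i j : Fin a, i ≠ j → ∀ x ∈ P i, x ∉ P j
  P_cover : ∀ i : Fin a, ∀ x ∈ Ain i ∪ Aout i, x ∈ P i
  P_order : ∀ i : Fin a, ∀ x ∈ Ain i, ∀ y ∈ Aout i,
    (P i).idxOf x < (P i).idxOf y

/-- The intersection graph of a family of lists of vertices (paths/walks):
two distinct members are adjacent iff they share a vertex. -/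
def interGraph {ι : Type} (F : ι → List V) : SimpleGraph ι where
  Adj i j := i ≠ j ∧ ∃ x : V, x ∈ F i ∧ x ∈ F j
  symm := by constructor; rintro i j ⟨hne, x, hx, hy⟩; exact ⟨hne.symm, x, hy, hx⟩
  loopless := by constructor; rintro i ⟨hne, -⟩; exact hne rfl

/-- A simple graph is `b`-degenerate (for a real `b`) if every nonempty (induced)
subgraph has a vertex of degree at most `b`. -/
def Degenerate {W : Type} (G : SimpleGraph W) (b : ℝ) : Prop :=
  ∀ S : Finset W, S.Nonempty → ∃ v ∈ S, (({u : W | u ∈ S ∧ G.Adj v u}).ncard : ℝ) ≤ b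

/-- The subgraph of `G` induced by `A` is `b`-degenerate. -/
def DegenerateOn {W : Type} (G : SimpleGraph W) (A : Set W) (b : ℝ) : Prop :=
  ∀ S : Finset W, (S : Set W) ⊆ A → S.Nonempty →
    ∃ v ∈ S, (({u : W | u ∈ S ∧ G.Adj v u}).ncard : ℝ) ≤ b

/-- `S` is `Z`-normal in `D`: `S` is disjoint from `Z`, and every directed walk in
`D - Z` beginning and ending in `S` has all its vertices in `S`. -/
def ZNormal (D : V → V → Prop) (Z S : Set V) : Prop :=
  Disjoint S Z ∧
    ∀ (w : List V) (u v : V), w.Chain' D → (∀ x ∈ w, x ∉ Z) →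
      w.head? = some u → w.getLast? = some v → u ∈ S → v ∈ S →
      ∀ x ∈ w, x ∈ S

/-- An arboreal decomposition of `D`: an arborescence (encoded by a finite node type
with a root and a parent function under which every node reaches the root), a
partition `W` of the vertices indexed by the nodes, and arc-sets `X` (the arc of a
non-root node `r` goes from `parent r` to `r`) such that for each arc the union of
the `W`-sets at or below its head is `X`-normal. -/
structure ArborealDecomp (D : V → V → Prop) where
  ι : Type
  fin : Fintype ι
  root : ι
  parent : ι → ι
  parent_root : parent root = root
  reach_root : ∀ r : ι, ∃ n : ℕ, parent^[n] r = root
  W : ι → Set V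
  X : ι → Set V
  part : ∀ v : V, ∃! r : ι, v ∈ W r
  normal : ∀ r : ι, r ≠ root →
    ZNormal D (X r) (⋃ r' ∈ {r' : ι | ∃ n : ℕ, parent^[n] r' = r}, W r')

/-- The bag associated to a node `r`: `W r` together with the `X`-sets of all arcs
incident to `r`. -/
def ArborealDecomp.nodeBag {D : V → V → Prop} (T : ArborealDecomp D) (r : T.ι) : Set V :=
  T.W r ∪ ⋃ c ∈ {c : T.ι | c ≠ T.root ∧ (c = r ∨ T.parent c = r)}, T.X c

/-- The directed treewidth of `D` is at least `x`: every arboreal decomposition has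
width at least `x`. -/
def DtwGE [Fintype V] (D : V → V → Prop) (x : ℝ) : Prop :=
  ∀ T : ArborealDecomp D, ∃ r : T.ι, x ≤ ((T.nodeBag r).ncard : ℝ) - 1

end Defs

section Aux

variable {V : Type}

lemma mem_getLast?' {l : List V} {x : V} (h : l.getLast? = some x) : x ∈ l := by
  have hne : l ≠ [] := by rintro rfl; simp at h
  rw [List.getLast?_eq_getLast hne, Option.some_inj] at h
  exact h ▸ List.getLast_mem hne

lemma mem_head?' {l : List V} {x : V} (h : l.head? = some x) : x ∈ l := by
  cases l with
  | nil => simp at h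
  | cons a t => simp only [List.head?_cons, Option.some_inj] at h; simp [h]

lemma getLast?_append_ne_nil {l₂ : List V} (l₁ : List V) (h : l₂ ≠ []) :
    (l₁ ++ l₂).getLast? = l₂.getLast? := by
  rw [List.getLast?_append, List.getLast?_eq_getLast h]
  rfl

lemma getLast?_cons_ne {t : List V} (a : V) (h : t ≠ []) :
    (a :: t).getLast? = t.getLast? := by
  have : a :: t = [a] ++ t := rfl
  rw [this, getLast?_append_ne_nil _ h]

lemma head?_append_cons (l₁ l₂ l₂' : List V) (x : V) :
    (l₁ ++ x :: l₂).head? = (l₁ ++ x :: l₂').head? := by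
  cases l₁ <;> simp

/-- From a walk one can extract a path with the same endpoints, inside the walk. -/
lemma exists_path_of_walk (D : V → V → Prop) :
    ∀ (w : List V), w ≠ [] → w.Chain' D →
    ∃ p, p ≠ [] ∧ p.Nodup ∧ p.Chain' D ∧ p.head? = w.head? ∧ p.getLast? = w.getLast? ∧
      ∀ x ∈ p, x ∈ w := by
  intro w
  induction w with
  | nil => simp
  | cons a t ih =>
    intro _ hc
    rcases eq_or_ne t [] with rfl | ht
    · exact ⟨[a], by simp, by simp, by simp [List.Chain'], rfl, rfl, by simp⟩
    · obtain ⟨p, hpne, hnd, hpc, hh, hl, hsub⟩ := ih ht hc.tail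
      by_cases hap : a ∈ p
      · obtain ⟨s, t', rfl⟩ := List.append_of_mem hap
        refine ⟨a :: t', by simp, ?_, ?_, by simp, ?_, ?_⟩
        · exact ((List.sublist_append_right s _).nodup) hnd
        · exact hpc.suffix ⟨s, rfl⟩
        · rw [getLast?_cons_ne a ht, ← hl, getLast?_append_ne_nil s (by simp)]
        · intro x hx
          exact List.mem_cons_of_mem a (hsub x (by
            rcases List.mem_cons.mp hx with rfl | hx'
            · exact hap
            · exact List.mem_append_right s (List.mem_cons_of_mem _ hx')))
      · refine ⟨a :: p, by simp, by simp [hnd, hap], ?_, by simp, ?_, ?_⟩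
        · refine List.isChain_cons.mpr ⟨?_, hpc⟩
          intro y hy
          have := (List.isChain_cons.mp hc).1
          exact this y (by rw [← hh]; exact hy)
        · rw [getLast?_cons_ne a hpne, hl, getLast?_cons_ne a ht]
        · intro x hx
          rcases List.mem_cons.mp hx with rfl | hx'
          · exact List.mem_cons_self
          · exact List.mem_cons_of_mem a (hsub x hx')

lemma exists_first_split (Q : V → Prop) :
    ∀ (p : List V), (∃ x ∈ p, Q x) →
    ∃ p₁ x p₂, p = p₁ ++ x :: p₂ ∧ Q x ∧ ∀ y ∈ p₁, ¬ Q y := by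
  intro p
  induction p with
  | nil => simp
  | cons a t ih =>
    intro h
    by_cases ha : Q a
    · exact ⟨[], a, t, rfl, ha, by simp⟩
    · have h' : ∃ x ∈ t, Q x := by
        rcases h with ⟨x, hx, hQ⟩
        rcases List.mem_cons.mp hx with rfl | hx'
        · exact absurd hQ ha
        · exact ⟨x, hx', hQ⟩
      obtain ⟨p₁, x, p₂, heq, hQ, hnone⟩ := ih h'
      refine ⟨a :: p₁, x, p₂, by simp [heq], hQ, ?_⟩
      rintro y hy
      rcases List.mem_cons.mp hy with rfl | hy'
      · exact ha
      · exact hnone y hy'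

lemma exists_last_split (Q : V → Prop) (p : List V) (h : ∃ x ∈ p, Q x) :
    ∃ p₁ x p₂, p = p₁ ++ x :: p₂ ∧ Q x ∧ ∀ y ∈ p₂, ¬ Q y := by
  obtain ⟨q₁, x, q₂, he, hQ, hnone⟩ := exists_first_split Q p.reverse
    (by rcases h with ⟨x, hx, hQ⟩; exact ⟨x, List.mem_reverse.mpr hx, hQ⟩)
  refine ⟨q₂.reverse, x, q₁.reverse, ?_, hQ, fun y hy => hnone y (by simpa using List.mem_reverse.mpr hy)⟩
  have := congrArg List.reverse he
  simpa using this

/-- `S` meets every directed path from `X` to `Y`. -/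
def DSep (D : V → V → Prop) (X Y S : Finset V) : Prop :=
  ∀ x y p, IsPathFromTo D x y p → x ∈ X → y ∈ Y → ∃ s ∈ S, s ∈ p

lemma linkage_mono {D D' : V → V → Prop} (h : ∀ a b, D a b → D' a b) {A B : Set V} {n : ℕ}
    {L : Fin n → List V} (hL : IsLinkage D A B L) : IsLinkage D' A B L := by
  obtain ⟨h1, h2⟩ := hL
  refine ⟨fun i => ?_, h2⟩
  obtain ⟨u, hu, v, hv, ⟨⟨hne, hnd, hch⟩, hh, hl⟩⟩ := h1 i
  exact ⟨u, hu, v, hv, ⟨⟨hne, hnd, hch.imp h⟩, hh, hl⟩⟩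

lemma menger_noarc [DecidableEq V] {D : V → V → Prop} (hno : ∀ a b : V, D a b → a = b)
    (X Y : Finset V) (m : ℕ)
    (hsep : ∀ S : Finset V, DSep D X Y S → m ≤ S.card) :
    ∃ L : Fin m → List V, IsLinkage D ↑X ↑Y L := by
  have hsing : ∀ x y p, IsPathFromTo D x y p → p = [x] ∧ x = y := by
    rintro x y p ⟨⟨hne, hnd, hch⟩, hh, hl⟩
    match p, hne with
    | [a], _ =>
      simp only [List.head?_cons, Option.some_inj] at hh
      simp only [List.getLast?_singleton, Option.some_inj] at hl
      exact ⟨by rw [hh], by rw [← hh, ← hl]⟩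
    | a :: b :: t, _ =>
      exfalso
      have hD : D a b := (List.isChain_cons_cons.mp hch).1
      have hab : a = b := hno _ _ hD
      have : a ∉ b :: t := (List.nodup_cons.mp hnd).1
      exact this (hab ▸ List.mem_cons_self)
  have hXY : DSep D X Y (X ∩ Y) := by
    intro x y p hp hx hy
    obtain ⟨hp1, hxy⟩ := hsing x y p hp
    exact ⟨x, Finset.mem_inter.mpr ⟨hx, hxy ▸ hy⟩, by simp [hp1]⟩
  obtain ⟨Z, hZsub, hZcard⟩ := Finset.exists_subset_card_eq (hsep _ hXY)
  set f : Fin m → V := fun i => (Z.equivFin.symm (Fin.cast hZcard.symm i) : V) with hf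
  have hfinj : Function.Injective f := by
    intro i j hij
    have := Subtype.coe_injective hij
    have := Z.equivFin.symm.injective this
    simpa [Fin.ext_iff] using this
  have hfZ : ∀ i, f i ∈ Z := fun i => (Z.equivFin.symm (Fin.cast hZcard.symm i)).2
  refine ⟨fun i => [f i], fun i => ?_, ?_⟩
  · have hmem := hZsub (hfZ i)
    exact ⟨f i, Finset.mem_coe.mpr (Finset.mem_inter.mp hmem).1,
      f i, Finset.mem_coe.mpr (Finset.mem_inter.mp hmem).2,
      ⟨by simp, by simp, by simp [List.Chain']⟩, rfl, rfl⟩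
  · intro i j hij x hxi hxj
    simp only [List.mem_singleton] at hxi hxj
    exact hij (hfinj (hxi ▸ hxj ▸ rfl))

lemma chain'_uses_arc {D : V → V → Prop} {u v : V} {p : List V}
    (hch : p.Chain' D) (h : ¬ p.Chain' (fun a b => D a b ∧ (a, b) ≠ (u, v))) :
    ∃ i, ∃ _ : i + 1 < p.length, p[i] = u ∧ p[i + 1] = v := by
  by_contra hno
  push_neg at hno
  apply h
  unfold List.Chain' at hch ⊢
  rw [List.isChain_iff_getElem] at hch ⊢
  intro i hi
  refine ⟨hch i hi, fun hpair => ?_⟩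
  have h1 : i + 1 < p.length := by omega
  simp only [List.get_eq_getElem, Prod.mk.injEq] at hpair
  exact hno i h1 hpair.1 hpair.2

lemma head?_take_succ (l : List V) (n : ℕ) : (l.take (n+1)).head? = l.head? := by
  cases l <;> simp

lemma getLast?_take {l : List V} {i : ℕ} (h : i < l.length) :
    (l.take (i+1)).getLast? = some l[i] := by
  have hlen : (l.take (i+1)).length = i+1 := by simp; omega
  rw [List.getLast?_eq_getElem?, hlen]
  simp only [Nat.add_sub_cancel]
  rw [List.getElem?_eq_getElem (by omega : i < (l.take (i+1)).length), List.getElem_take]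

lemma head?_drop {l : List V} {i : ℕ} (h : i < l.length) :
    (l.drop i).head? = some l[i] := by
  rw [List.head?_eq_getElem?,
    List.getElem?_eq_getElem (by simp; omega : 0 < (l.drop i).length), List.getElem_drop]
  simp

lemma getLast?_drop' {l : List V} {i : ℕ} (h : i < l.length) :
    (l.drop i).getLast? = l.getLast? := by
  conv_rhs => rw [← List.take_append_drop i l]
  rw [getLast?_append_ne_nil]
  exact List.ne_nil_of_length_pos (by simp; omega)

/-- Trim a path to its first visit of `T`. -/
lemma trim_front {D : V → V → Prop} {p : List V} {x a : V} (hp : IsPathFromTo D x a p)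
    (T : Finset V) [DecidableEq V] (hmem : ∃ w ∈ p, w ∈ T) :
    ∃ q w t, q = t ++ [w] ∧ w ∈ T ∧ (∀ y ∈ t, y ∉ T) ∧ IsPathFromTo D x w q ∧
      ∀ z ∈ q, z ∈ p := by
  obtain ⟨t, w, p₂, heq, hwT, hnone⟩ := exists_first_split (· ∈ T) p hmem
  obtain ⟨⟨hne, hnd, hch⟩, hh, hl⟩ := hp
  have hpre : (t ++ [w]) <+: p := ⟨p₂, by rw [heq]; simp⟩
  refine ⟨t ++ [w], w, t, rfl, hwT, hnone, ⟨⟨by simp, hpre.sublist.nodup hnd, hch.prefix hpre⟩,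
    ?_, List.getLast?_concat⟩, fun z hz => hpre.sublist.mem hz⟩
  rw [← hh, heq]
  exact head?_append_cons t [] p₂ w

/-- Trim a path to its last visit of `T`. -/
lemma trim_back {D : V → V → Prop} {p : List V} {x y : V} (hp : IsPathFromTo D x y p)
    (T : Finset V) [DecidableEq V] (hmem : ∃ w ∈ p, w ∈ T) :
    ∃ q w t, q = w :: t ∧ w ∈ T ∧ (∀ z ∈ t, z ∉ T) ∧ IsPathFromTo D w y q ∧
      ∀ z ∈ q, z ∈ p := by
  obtain ⟨p₁, w, t, heq, hwT, hnone⟩ := exists_last_split (· ∈ T) p hmem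
  obtain ⟨⟨hne, hnd, hch⟩, hh, hl⟩ := hp
  have hsuf : (w :: t) <:+ p := ⟨p₁, by rw [heq]⟩
  refine ⟨w :: t, w, t, rfl, hwT, hnone, ⟨⟨by simp, hsuf.sublist.nodup hnd, hch.suffix hsuf⟩,
    rfl, ?_⟩, fun z hz => hsuf.sublist.mem hz⟩
  rw [← hl, heq, getLast?_append_ne_nil _ (by simp)]

theorem menger_aux [Fintype V] [DecidableEq V] (m : ℕ) : ∀ (n : ℕ) (D : V → V → Prop),
    {e : V × V | D e.1 e.2 ∧ e.1 ≠ e.2}.ncard ≤ n →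
    ∀ X Y : Finset V, (∀ S : Finset V, DSep D X Y S → m ≤ S.card) →
    ∃ L : Fin m → List V, IsLinkage D ↑X ↑Y L := by
  intro n
  induction n with
  | zero =>
    intro D hD X Y hsep
    refine menger_noarc ?_ X Y m hsep
    intro a b hab
    by_contra hne
    have h1 : 0 < {e : V × V | D e.1 e.2 ∧ e.1 ≠ e.2}.ncard :=
      (Set.ncard_pos (Set.toFinite _)).mpr ⟨(a, b), hab, hne⟩
    omega
  | succ n ih =>
    intro D hD X Y hsep
    by_cases harc : ∃ e : V × V, D e.1 e.2 ∧ e.1 ≠ e.2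
    swap
    · push_neg at harc
      exact menger_noarc (fun a b hab => harc (a, b) hab) X Y m hsep
    obtain ⟨⟨u, v⟩, hDuv, huv⟩ := harc
    set D₀ : V → V → Prop := fun a b => D a b ∧ (a, b) ≠ (u, v) with hD₀def
    have hD₀sub : ∀ a b, D₀ a b → D a b := fun a b h => h.1
    have hcount : {e : V × V | D₀ e.1 e.2 ∧ e.1 ≠ e.2}.ncard ≤ n := by
      have hss : {e : V × V | D₀ e.1 e.2 ∧ e.1 ≠ e.2} ⊂ {e : V × V | D e.1 e.2 ∧ e.1 ≠ e.2} := by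
        constructor
        · rintro e ⟨⟨h1, _⟩, h2⟩; exact ⟨h1, h2⟩
        · intro hsub
          exact (hsub ⟨hDuv, huv⟩).1.2 rfl
      have := Set.ncard_lt_ncard hss (Set.toFinite _)
      omega
    by_cases hsmall : ∀ S : Finset V, DSep D₀ X Y S → m ≤ S.card
    · obtain ⟨L, hL⟩ := ih D₀ hcount X Y hsmall
      exact ⟨L, linkage_mono hD₀sub hL⟩
    push_neg at hsmall
    obtain ⟨S, hSsep, hScard⟩ := hsmall
    have hSu : DSep D X Y (insert u S) := by
      rintro x y p hp hx hy
      by_cases hch : p.Chain' D₀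
      · obtain ⟨s, hs, hsp⟩ := hSsep x y p ⟨⟨hp.1.1, hp.1.2.1, hch⟩, hp.2.1, hp.2.2⟩ hx hy
        exact ⟨s, Finset.mem_insert_of_mem hs, hsp⟩
      · obtain ⟨i, h1, hui, hvi⟩ := chain'_uses_arc hp.1.2.2 hch
        exact ⟨u, Finset.mem_insert_self _ _, hui ▸ List.getElem_mem (by omega)⟩
    have hSv : DSep D X Y (insert v S) := by
      rintro x y p hp hx hy
      by_cases hch : p.Chain' D₀
      · obtain ⟨s, hs, hsp⟩ := hSsep x y p ⟨⟨hp.1.1, hp.1.2.1, hch⟩, hp.2.1, hp.2.2⟩ hx hy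
        exact ⟨s, Finset.mem_insert_of_mem hs, hsp⟩
      · obtain ⟨i, h1, hui, hvi⟩ := chain'_uses_arc hp.1.2.2 hch
        exact ⟨v, Finset.mem_insert_self _ _, hvi ▸ List.getElem_mem h1⟩
    have hmu := hsep _ hSu
    have hmv := hsep _ hSv
    have huS : u ∉ S := by
      intro huS'
      rw [Finset.insert_eq_self.mpr huS'] at hmu; omega
    have hvS : v ∉ S := by
      intro hvS'
      rw [Finset.insert_eq_self.mpr hvS'] at hmv; omega
    have hcardSu : (insert u S).card = m := by
      rw [Finset.card_insert_of_notMem huS]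
      rw [Finset.card_insert_of_notMem huS] at hmu; omega
    have hcardSv : (insert v S).card = m := by
      rw [Finset.card_insert_of_notMem hvS]
      rw [Finset.card_insert_of_notMem hvS] at hmv; omega
    have htransf1 : ∀ T : Finset V, DSep D₀ X (insert u S) T → m ≤ T.card := by
      intro T hT
      apply hsep
      rintro x y p hp hx hy
      by_cases hch : p.Chain' D₀
      · have hp₀ : IsPathFromTo D₀ x y p := ⟨⟨hp.1.1, hp.1.2.1, hch⟩, hp.2.1, hp.2.2⟩
        obtain ⟨s, hs, hsp⟩ := hSsep x y p hp₀ hx hy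
        obtain ⟨q, w, t, hqeq, hwT, hnone, hq, hqsub⟩ := trim_front hp₀ (insert u S)
          ⟨s, hsp, Finset.mem_insert_of_mem hs⟩
        obtain ⟨c, hcT, hcq⟩ := hT x w q hq hx hwT
        exact ⟨c, hcT, hqsub c hcq⟩
      · obtain ⟨i, h1, hui, hvi⟩ := chain'_uses_arc hp.1.2.2 hch
        have htake_ch : (p.take (i + 1)).Chain' D₀ := by
          by_contra hc
          obtain ⟨j, hj, huj, hvj⟩ := chain'_uses_arc (hp.1.2.2.take _) hc
          have hjt : j + 1 < (p.take (i + 1)).length := hj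
          have hjp : j < p.length := by simp at hjt; omega
          have hji : j + 1 < i + 1 := by simp at hjt; omega
          have hpj : p[j]'hjp = u := by rw [← huj, List.getElem_take]
          have : j = i := (List.Nodup.getElem_inj_iff hp.1.2.1).mp (by rw [hpj, hui])
          omega
        have hq : IsPathFromTo D₀ x u (p.take (i + 1)) := by
          refine ⟨⟨?_, (List.take_sublist _ _).nodup hp.1.2.1, htake_ch⟩, ?_, ?_⟩
          · exact List.ne_nil_of_length_pos (by simp; omega)
          · rw [head?_take_succ]; exact hp.2.1
          · rw [getLast?_take (by omega : i < p.length), hui]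
        obtain ⟨c, hcT, hcq⟩ := hT x u _ hq hx (Finset.mem_insert_self _ _)
        exact ⟨c, hcT, (List.take_sublist _ _).subset hcq⟩
    have htransf2 : ∀ T : Finset V, DSep D₀ (insert v S) Y T → m ≤ T.card := by
      intro T hT
      apply hsep
      rintro x y p hp hx hy
      by_cases hch : p.Chain' D₀
      · have hp₀ : IsPathFromTo D₀ x y p := ⟨⟨hp.1.1, hp.1.2.1, hch⟩, hp.2.1, hp.2.2⟩
        obtain ⟨s, hs, hsp⟩ := hSsep x y p hp₀ hx hy
        obtain ⟨q, w, t, hqeq, hwT, hnone, hq, hqsub⟩ := trim_back hp₀ (insert v S)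
          ⟨s, hsp, Finset.mem_insert_of_mem hs⟩
        obtain ⟨c, hcT, hcq⟩ := hT w y q hq hwT hy
        exact ⟨c, hcT, hqsub c hcq⟩
      · obtain ⟨i, h1, hui, hvi⟩ := chain'_uses_arc hp.1.2.2 hch
        have hdrop_ch : (p.drop (i + 1)).Chain' D₀ := by
          by_contra hc
          obtain ⟨j, hj, huj, hvj⟩ := chain'_uses_arc (hp.1.2.2.drop _) hc
          have hjp : i + 1 + j < p.length := by simp at hj; omega
          have hpj : p[i + 1 + j]'hjp = u := by rw [← huj, List.getElem_drop]
          have : i + 1 + j = i := (List.Nodup.getElem_inj_iff hp.1.2.1).mp (by rw [hpj, hui])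
          omega
        have hq : IsPathFromTo D₀ v y (p.drop (i + 1)) := by
          refine ⟨⟨List.ne_nil_of_length_pos (by simp; omega),
            (List.drop_sublist _ _).nodup hp.1.2.1, hdrop_ch⟩, ?_, ?_⟩
          · rw [head?_drop h1, hvi]
          · rw [getLast?_drop' h1]; exact hp.2.2
        obtain ⟨c, hcT, hcq⟩ := hT v y _ hq (Finset.mem_insert_self _ _) hy
        exact ⟨c, hcT, (List.drop_sublist _ _).subset hcq⟩
    obtain ⟨L1, hL1⟩ := ih D₀ hcount X (insert u S) htransf1
    obtain ⟨L2, hL2⟩ := ih D₀ hcount (insert v S) Y htransf2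
    have trim1 : ∀ i : Fin m, ∃ q : List V, ∃ x w : V, ∃ t : List V,
        q = t ++ [w] ∧ x ∈ X ∧ w ∈ insert u S ∧ (∀ y ∈ t, y ∉ insert u S) ∧
        IsPathFromTo D₀ x w q ∧ ∀ z ∈ q, z ∈ L1 i := by
      intro i
      obtain ⟨x, hx, a, ha, hp⟩ := hL1.1 i
      obtain ⟨q, w, t, hqeq, hwT, hnone, hq, hqsub⟩ := trim_front hp (insert u S)
        ⟨a, mem_getLast?' hp.2.2, Finset.mem_coe.mp ha⟩
      exact ⟨q, x, w, t, hqeq, Finset.mem_coe.mp hx, hwT, hnone, hq, hqsub⟩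
    choose P xs e ts hPeq hxsX heSu hts hP hPsub using trim1
    have trim2 : ∀ j : Fin m, ∃ q : List V, ∃ w y : V, ∃ t : List V,
        q = w :: t ∧ w ∈ insert v S ∧ y ∈ Y ∧ (∀ z ∈ t, z ∉ insert v S) ∧
        IsPathFromTo D₀ w y q ∧ ∀ z ∈ q, z ∈ L2 j := by
      intro j
      obtain ⟨b, hb, y, hy, hp⟩ := hL2.1 j
      obtain ⟨q, w, t, hqeq, hwT, hnone, hq, hqsub⟩ := trim_back hp (insert v S)
        ⟨b, mem_head?' hp.2.1, Finset.mem_coe.mp hb⟩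
      exact ⟨q, w, y, t, hqeq, hwT, Finset.mem_coe.mp hy, hnone, hq, hqsub⟩
    choose Q bs ys ss hQeq hbSv hysY hss hQ hQsub using trim2
    have hPdisj : ∀ i j, i ≠ j → ∀ w, w ∈ P i → w ∉ P j :=
      fun i j hij w hwi hwj => hL1.2 i j hij w (hPsub i w hwi) (hPsub j w hwj)
    have hQdisj : ∀ i j, i ≠ j → ∀ w, w ∈ Q i → w ∉ Q j :=
      fun i j hij w hwi hwj => hL2.2 i j hij w (hQsub i w hwi) (hQsub j w hwj)
    have heP : ∀ i, e i ∈ P i := fun i => by rw [hPeq i]; simp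
    have hbQ : ∀ j, bs j ∈ Q j := fun j => by rw [hQeq j]; simp
    have heinj : Function.Injective e := by
      intro i j hij
      by_contra hne
      exact hPdisj i j hne (e i) (heP i) (hij ▸ heP j)
    have hbinj : Function.Injective bs := by
      intro i j hij
      by_contra hne
      exact hQdisj i j hne (bs i) (hbQ i) (hij ▸ hbQ j)
    have hbsurj : ∀ s ∈ insert v S, ∃ j, bs j = s := by
      intro s hs
      have himg : Finset.image bs Finset.univ = insert v S := by
        apply Finset.eq_of_subset_of_card_le
        · intro z hz; obtain ⟨i, _, rfl⟩ := Finset.mem_image.mp hz; exact hbSv i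
        · rw [Finset.card_image_of_injective _ hbinj, Finset.card_univ, Fintype.card_fin,
            hcardSv]
      rw [← himg] at hs
      obtain ⟨i, _, hi⟩ := Finset.mem_image.mp hs
      exact ⟨i, hi⟩
    have htgt : ∀ i, (if e i = u then v else e i) ∈ insert v S := by
      intro i
      by_cases h : e i = u
      · simp [h]
      · simp only [if_neg h]
        rcases Finset.mem_insert.mp (heSu i) with h' | h'
        · exact absurd h' h
        · exact Finset.mem_insert_of_mem h'
    choose τ hτ using fun i => hbsurj _ (htgt i)
    have htgtinj : ∀ i j, (if e i = u then v else e i) = (if e j = u then v else e j) →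
        e i = e j := by
      intro i j h
      by_cases hi : e i = u <;> by_cases hj : e j = u
      · rw [hi, hj]
      · exfalso
        rw [if_pos hi, if_neg hj] at h
        rcases Finset.mem_insert.mp (heSu j) with h' | h'
        · exact hj h'
        · exact hvS (h ▸ h')
      · exfalso
        rw [if_neg hi, if_pos hj] at h
        rcases Finset.mem_insert.mp (heSu i) with h' | h'
        · exact hi h'
        · exact hvS (h ▸ h')
      · rw [if_neg hi, if_neg hj] at h; exact h
    have hτinj : Function.Injective τ := fun i j hij =>
      heinj (htgtinj i j (by rw [← hτ i, ← hτ j, hij]))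
    have hPSu : ∀ i, ∀ z ∈ P i, z ∈ insert u S → z = e i := by
      intro i z hz hzSu
      rw [hPeq i] at hz
      rcases List.mem_append.mp hz with hz' | hz'
      · exact absurd hzSu (hts i z hz')
      · simpa using hz'
    have hQSv : ∀ j, ∀ z ∈ Q j, z ∈ insert v S → z = bs j := by
      intro j z hz hzSv
      rw [hQeq j] at hz
      rcases List.mem_cons.mp hz with hz' | hz'
      · exact hz'
      · exact absurd hzSv (hss j z hz')
    have hkey : ∀ i j w, w ∈ P i → w ∈ Q j → w ∈ S ∧ w = e i ∧ w = bs j := by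
      intro i j w hwP hwQ
      obtain ⟨α, β, hαβ⟩ := List.append_of_mem hwP
      obtain ⟨γ, δ, hγδ⟩ := List.append_of_mem hwQ
      have h2 : (w :: δ).Chain' D₀ := (hQ j).1.2.2.suffix ⟨γ, hγδ.symm⟩
      have hchain : (α ++ w :: δ).Chain' D₀ := by
        have h1 : (α ++ [w]).Chain' D₀ := (hP i).1.2.2.prefix ⟨β, by rw [hαβ]; simp⟩
        have h3 := List.IsChain.append h1 h2.tail ?_
        · simpa [List.Chain'] using h3
        · intro a ha b hb
          simp only [List.getLast?_concat, Option.mem_def, Option.some_inj] at ha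
          subst ha
          exact (List.isChain_cons.mp h2).1 b hb
      have hhead : (α ++ w :: δ).head? = some (xs i) := by
        rw [head?_append_cons α δ β w, ← hαβ]; exact (hP i).2.1
      have hlast : (α ++ w :: δ).getLast? = some (ys j) := by
        rw [getLast?_append_ne_nil α (by simp),
          ← getLast?_append_ne_nil γ (show (w :: δ) ≠ [] by simp), ← hγδ]
        exact (hQ j).2.2
      obtain ⟨p', hpne, hpnd, hpch, hph, hpl, hpsub⟩ :=
        exists_path_of_walk D₀ (α ++ w :: δ) (by simp) hchain
      obtain ⟨s, hsS, hsp⟩ := hSsep (xs i) (ys j) p'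
        ⟨⟨hpne, hpnd, hpch⟩, by rw [hph, hhead], by rw [hpl, hlast]⟩ (hxsX i) (hysY j)
      have hs' := hpsub s hsp
      rcases List.mem_append.mp hs' with hsα | hswδ
      · exfalso
        have hse : s = e i := hPSu i s (by rw [hαβ]; exact List.mem_append_left _ hsα)
          (Finset.mem_insert_of_mem hsS)
        have hei : e i ∈ (w :: β) := by
          have hl := (hP i).2.2
          rw [hαβ, getLast?_append_ne_nil α (by simp)] at hl
          exact mem_getLast?' hl
        have hnd := (hP i).1.2.1
        rw [hαβ] at hnd
        exact (List.disjoint_of_nodup_append hnd) (hse ▸ hsα) hei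
      rcases List.mem_cons.mp hswδ with rfl | hsδ
      · exact ⟨hsS, hPSu i s hwP (Finset.mem_insert_of_mem hsS),
          hQSv j s hwQ (Finset.mem_insert_of_mem hsS)⟩
      · exfalso
        have hsb : s = bs j := hQSv j s
          (by rw [hγδ]; exact List.mem_append_right _ (List.mem_cons_of_mem _ hsδ))
          (Finset.mem_insert_of_mem hsS)
        have hndQ := (hQ j).1.2.1
        cases γ with
        | nil =>
          have hwb : bs j = w ∧ ss j = δ := by
            have hh := (hQeq j).symm.trans hγδ
            simp only [List.nil_append, List.cons.injEq] at hh
            exact ⟨hh.1, hh.2⟩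
          have hnd2 := hndQ
          rw [hQeq j] at hnd2
          exact (List.nodup_cons.mp hnd2).1 (hwb.2 ▸ (hsb ▸ hsδ))
        | cons c γ' =>
          have hhd : bs j = c := by
            have hh := (hQeq j).symm.trans hγδ
            simp only [List.cons_append, List.cons.injEq] at hh
            exact hh.1
          rw [hγδ] at hndQ
          exact (List.disjoint_of_nodup_append (l₁ := c :: γ') hndQ)
            (by rw [hhd]; exact List.mem_cons_self) (List.mem_cons_of_mem _ (hsb ▸ hsδ))
    -- assemble the final linkage
    have hlastP : ∀ i a, a ∈ (P i).getLast? → a = e i := by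
      intro i a ha
      rw [(hP i).2.2] at ha
      exact (Option.mem_some_iff.mp ha).symm
    refine ⟨fun i => if e i = u then P i ++ Q (τ i) else P i ++ (Q (τ i)).tail, ?_, ?_⟩
    · intro i
      by_cases hi : e i = u
      · simp only [if_pos hi]
        refine ⟨xs i, Finset.mem_coe.mpr (hxsX i), ys (τ i), Finset.mem_coe.mpr (hysY (τ i)),
          ⟨⟨?_, ?_, ?_⟩, ?_, ?_⟩⟩
        · simp [(hP i).1.1]
        · rw [List.nodup_append]
          refine ⟨(hP i).1.2.1, (hQ (τ i)).1.2.1, ?_⟩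
          intro w hwP w' hwQ hww
          rw [← hww] at hwQ
          obtain ⟨hwS, hwe, _⟩ := hkey i (τ i) w hwP hwQ
          rw [hwe, hi] at hwS; exact huS hwS
        · refine List.IsChain.append ((hP i).1.2.2.imp hD₀sub) ((hQ (τ i)).1.2.2.imp hD₀sub) ?_
          intro a ha b hb
          have ha' : a = e i := hlastP i a ha
          have hb' : b = bs (τ i) := by
            rw [(hQ (τ i)).2.1] at hb
            exact (Option.mem_some_iff.mp hb).symm
          rw [ha', hb', hi, hτ i, if_pos hi]
          exact hDuv
        · rw [List.head?_append, (hP i).2.1]; rfl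
        · rw [getLast?_append_ne_nil _ (hQ (τ i)).1.1]; exact (hQ (τ i)).2.2
      · have heiS : e i ∈ S := by
          rcases Finset.mem_insert.mp (heSu i) with h | h
          · exact absurd h hi
          · exact h
        have hbτ : bs (τ i) = e i := by rw [hτ i, if_neg hi]
        simp only [if_neg hi]
        refine ⟨xs i, Finset.mem_coe.mpr (hxsX i), ys (τ i), Finset.mem_coe.mpr (hysY (τ i)),
          ⟨⟨?_, ?_, ?_⟩, ?_, ?_⟩⟩
        · simp [(hP i).1.1]
        · rw [List.nodup_append]
          refine ⟨(hP i).1.2.1, ?_, ?_⟩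
          · have := (hQ (τ i)).1.2.1
            rw [hQeq (τ i)] at this
            rw [hQeq (τ i)]
            exact (List.nodup_cons.mp this).2
          · intro w hwP w' hwtail hww
            rw [← hww] at hwtail
            have hwQ : w ∈ Q (τ i) := List.mem_of_mem_tail hwtail
            obtain ⟨hwS, hwe, hwb⟩ := hkey i (τ i) w hwP hwQ
            have hndQ := (hQ (τ i)).1.2.1
            rw [hQeq (τ i)] at hndQ hwtail
            simp only [List.tail_cons] at hwtail
            exact (List.nodup_cons.mp hndQ).1 (hwb ▸ hwtail)
        · refine List.IsChain.append ((hP i).1.2.2.imp hD₀sub)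
            (((hQ (τ i)).1.2.2.imp hD₀sub).tail) ?_
          intro a ha b hb
          have ha' : a = e i := hlastP i a ha
          have hchQ := (hQ (τ i)).1.2.2.imp hD₀sub
          rw [hQeq (τ i)] at hchQ hb
          have hDb := (List.isChain_cons.mp hchQ).1 b (by simpa using hb)
          rw [ha', ← hbτ]
          exact hDb
        · rw [List.head?_append, (hP i).2.1]; rfl
        · have hQl := (hQ (τ i)).2.2
          rw [hQeq (τ i)]
          rw [hQeq (τ i)] at hQl
          cases hssi : ss (τ i) with
          | nil =>
            rw [hssi] at hQl
            simp only [List.getLast?_singleton, Option.some_inj] at hQl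
            simp only [List.tail_cons, List.append_nil]
            rw [(hP i).2.2, ← hQl, hbτ]
          | cons c t =>
            rw [hssi] at hQl
            simp only [List.tail_cons]
            rw [getLast?_append_ne_nil _ (by simp), ← getLast?_cons_ne (bs (τ i)) (by simp)]
            exact hQl
    · intro i j hij w hwi hwj
      replace hwi : w ∈ if e i = u then P i ++ Q (τ i) else P i ++ (Q (τ i)).tail := hwi
      replace hwj : w ∈ if e j = u then P j ++ Q (τ j) else P j ++ (Q (τ j)).tail := hwj
      have hmemi : w ∈ P i ∨ w ∈ Q (τ i) := by
        by_cases hi : e i = u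
        · rw [if_pos hi] at hwi
          rcases List.mem_append.mp hwi with h | h
          · exact Or.inl h
          · exact Or.inr h
        · rw [if_neg hi] at hwi
          rcases List.mem_append.mp hwi with h | h
          · exact Or.inl h
          · exact Or.inr (List.mem_of_mem_tail h)
      have hmemj : w ∈ P j ∨ w ∈ Q (τ j) := by
        by_cases hj : e j = u
        · rw [if_pos hj] at hwj
          rcases List.mem_append.mp hwj with h | h
          · exact Or.inl h
          · exact Or.inr h
        · rw [if_neg hj] at hwj
          rcases List.mem_append.mp hwj with h | h
          · exact Or.inl h
          · exact Or.inr (List.mem_of_mem_tail h)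
      rcases hmemi with h1 | h1 <;> rcases hmemj with h2 | h2
      · exact hPdisj i j hij w h1 h2
      · obtain ⟨hwS, hwe, hwb⟩ := hkey i (τ j) w h1 h2
        have hτj := hτ j
        by_cases hj : e j = u
        · rw [if_pos hj] at hτj
          rw [hτj] at hwb; rw [hwb] at hwS; exact hvS hwS
        · rw [if_neg hj] at hτj
          exact hij (heinj (by rw [← hwe, hwb, hτj]))
      · obtain ⟨hwS, hwe, hwb⟩ := hkey j (τ i) w h2 h1
        have hτj := hτ i
        by_cases hj : e i = u
        · rw [if_pos hj] at hτj
          rw [hτj] at hwb; rw [hwb] at hwS; exact hvS hwS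
        · rw [if_neg hj] at hτj
          exact hij (heinj (by rw [← hwe, hwb, hτj]))
      · exact hQdisj _ _ (fun hττ => hij (hτinj hττ)) w h1 h2

theorem menger [Fintype V] [DecidableEq V] (D : V → V → Prop) (X Y : Finset V) (m : ℕ)
    (hsep : ∀ S : Finset V, DSep D X Y S → m ≤ S.card) :
    ∃ L : Fin m → List V, IsLinkage D ↑X ↑Y L :=
  menger_aux m _ D le_rfl X Y hsep

lemma strong_sep [Fintype V] {D : V → V → Prop} {c : ℕ} (h : IsKStrong D c)
    {X Y : Finset V} {m : ℕ} (hX : m ≤ X.card) (hY : m ≤ Y.card) (hm : m ≤ c) :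
    ∀ S : Finset V, DSep D X Y S → m ≤ S.card := by
  intro S hS
  by_contra hlt
  push_neg at hlt
  have hSc : S.card < c := lt_of_lt_of_le hlt hm
  have hstrong := h.2 S hSc
  have hXS : (X \ S).Nonempty := by
    rw [← Finset.card_pos]
    have := Finset.le_card_sdiff S X
    omega
  have hYS : (Y \ S).Nonempty := by
    rw [← Finset.card_pos]
    have := Finset.le_card_sdiff S Y
    omega
  obtain ⟨x, hx⟩ := hXS
  obtain ⟨y, hy⟩ := hYS
  rw [Finset.mem_sdiff] at hx hy
  obtain ⟨w, hwne, hwch, hwS, hwh, hwl⟩ := hstrong x (by simpa using hx.2) y (by simpa using hy.2)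
  obtain ⟨p, hpne, hpnd, hpch, hph, hpl, hpsub⟩ := exists_path_of_walk D w hwne hwch
  obtain ⟨s, hsS, hsp⟩ := hS x y p ⟨⟨hpne, hpnd, hpch⟩, by rw [hph, hwh], by rw [hpl, hwl]⟩
    hx.1 hy.1
  exact (by simpa using hwS s (hpsub s hsp) : s ∉ S) hsS

lemma linkage_of_strong [Fintype V] [DecidableEq V] {D : V → V → Prop} {c : ℕ}
    (h : IsKStrong D c) (X Y : Finset V) {m : ℕ}
    (hX : m ≤ X.card) (hY : m ≤ Y.card) (hm : m ≤ c) :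
    ∃ L : Fin m → List V, IsLinkage D ↑X ↑Y L :=
  menger D X Y m (strong_sep h hX hY hm)

lemma outdeg_of_strong [Fintype V] [DecidableEq V] {D : V → V → Prop} {c : ℕ}
    (h : IsKStrong D c) (T : Finset V) (hT : T.card < c) {v : V} (hv : v ∉ T) :
    c - T.card ≤ {w : V | w ∉ T ∧ w ≠ v ∧ D v w}.ncard := by
  by_contra hlt
  push_neg at hlt
  have hNfin : {w : V | w ∉ T ∧ w ≠ v ∧ D v w}.Finite := Set.toFinite _
  set N := hNfin.toFinset with hN
  have hNcard : N.card = {w : V | w ∉ T ∧ w ≠ v ∧ D v w}.ncard := by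
    rw [hN, Set.ncard_eq_toFinset_card _ hNfin]
  set S := T ∪ N with hSdef
  have hScard : S.card < c := by
    have h1 : S.card ≤ T.card + N.card := Finset.card_union_le T N
    omega
  have hstrong := h.2 S hScard
  have hvS : v ∉ S := by
    rw [hSdef, Finset.mem_union]
    rintro (h1 | h1)
    · exact hv h1
    · rw [hN, Set.Finite.mem_toFinset] at h1
      exact h1.2.1 rfl
  have hex : (Finset.univ \ insert v S).Nonempty := by
    rw [← Finset.card_pos]
    by_contra hc
    push_neg at hc
    interval_cases h' : (Finset.univ \ insert v S).card
    · have hsub : (Finset.univ : Finset V) ⊆ insert v S := by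
        intro z _
        by_contra hz
        have : z ∈ Finset.univ \ insert v S := by simp [hz]
        rw [Finset.card_eq_zero.mp h'] at this
        simp at this
      have h2 := Finset.card_le_card hsub
      have h3 := Finset.card_insert_le v S
      have h4 := h.1
      rw [Finset.card_univ] at h2
      omega
  obtain ⟨z, hz⟩ := hex
  rw [Finset.mem_sdiff, Finset.mem_insert] at hz
  push_neg at hz
  obtain ⟨w, hwne, hwch, hwS, hwh, hwl⟩ := hstrong v (by simpa using hvS) z
    (by simpa using hz.2.2)
  obtain ⟨p, hpne, hpnd, hpch, hph, hpl, hpsub⟩ := exists_path_of_walk D w hwne hwch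
  rw [hwh] at hph
  rw [hwl] at hpl
  match p, hpne, hpnd, hpch, hph, hpl with
  | [a], _, _, _, hph, hpl =>
    simp only [List.head?_cons, Option.some_inj] at hph
    simp only [List.getLast?_singleton, Option.some_inj] at hpl
    exact hz.2.1 (by rw [← hph, ← hpl])
  | a :: b :: t, _, hpnd, hpch, hph, hpl =>
    simp only [List.head?_cons, Option.some_inj] at hph
    subst hph
    have hDab : D a b := (List.isChain_cons_cons.mp hpch).1
    have hba : b ≠ a := by
      intro hba
      exact (List.nodup_cons.mp hpnd).1 (hba ▸ List.mem_cons_self)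
    have hbS : b ∉ S := by
      have := hpsub b (List.mem_cons_of_mem _ (List.mem_cons_self))
      simpa using hwS b this
    have hbN : b ∈ N := by
      rw [hN, Set.Finite.mem_toFinset]
      refine ⟨fun hbT => hbS (Finset.mem_union_left _ hbT), hba, hDab⟩
    exact hbS (Finset.mem_union_right _ hbN)

lemma long_path [Fintype V] {D : V → V → Prop} (T : Finset V) (d : ℕ)
    (hdeg : ∀ v : V, v ∉ T → d ≤ {w : V | w ∉ T ∧ w ≠ v ∧ D v w}.ncard)
    {v0 : V} (hv0 : v0 ∉ T) :
    ∃ p : List V, IsPathList D p ∧ (∀ x ∈ p, x ∉ T) ∧ d ≤ p.length := by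
  suffices haux : ∀ n (p : List V), IsPathList D p → (∀ x ∈ p, x ∉ T) →
      Fintype.card V - p.length ≤ n →
      ∃ q, IsPathList D q ∧ (∀ x ∈ q, x ∉ T) ∧ d ≤ q.length by
    exact haux (Fintype.card V) [v0] ⟨by simp, by simp, by simp [List.Chain']⟩ (by simpa) (by omega)
  intro n
  induction n with
  | zero =>
    intro p hp hpT hlen
    refine ⟨p, hp, hpT, ?_⟩
    have h1 := hdeg v0 hv0
    have h2 : {w : V | w ∉ T ∧ w ≠ v0 ∧ D v0 w}.ncard ≤ Fintype.card V :=
      calc {w : V | w ∉ T ∧ w ≠ v0 ∧ D v0 w}.ncard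
          ≤ (Set.univ : Set V).ncard := Set.ncard_le_ncard (Set.subset_univ _) Set.finite_univ
        _ = Nat.card V := Set.ncard_univ V
        _ = Fintype.card V := Nat.card_eq_fintype_card
    omega
  | succ n ih =>
    intro p hp hpT hlen
    have hpne := hp.1
    set a := p.getLast hpne with ha
    by_cases hw : ∃ w : V, w ∉ T ∧ w ≠ a ∧ D a w ∧ w ∉ p
    · obtain ⟨w, hwT, hwa, hDaw, hwp⟩ := hw
      have hq : IsPathList D (p ++ [w]) := by
        refine ⟨by simp, ?_, ?_⟩
        · rw [List.nodup_append]
          refine ⟨hp.2.1, by simp, ?_⟩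
          intro x hx y hy hxy
          simp only [List.mem_singleton] at hy
          rw [hy] at hxy
          exact hwp (hxy ▸ hx)
        · refine List.IsChain.append hp.2.2 (by simp) ?_
          intro x hx y hy
          simp only [List.head?_cons, Option.mem_def, Option.some_inj] at hy
          subst hy
          have hxa : x = a := by
            rw [List.getLast?_eq_getLast hpne] at hx
            exact (Option.mem_some_iff.mp hx).symm
          rw [hxa]
          exact hDaw
      have hlen' : Fintype.card V - (p ++ [w]).length ≤ n := by simp; omega
      refine ih (p ++ [w]) hq ?_ hlen'
      intro x hx
      rcases List.mem_append.mp hx with h1 | h1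
      · exact hpT x h1
      · simp only [List.mem_singleton] at h1
        exact h1 ▸ hwT
    · push_neg at hw
      refine ⟨p, hp, hpT, ?_⟩
      have haT : a ∉ T := hpT a (List.getLast_mem hpne)
      have hsub : {w : V | w ∉ T ∧ w ≠ a ∧ D a w} ⊆ {x | x ∈ p} := by
        rintro w ⟨h1, h2, h3⟩
        exact hw w h1 h2 h3
      have h1 := hdeg a haT
      have h2 : {x : V | x ∈ p}.ncard ≤ p.length := by
        classical
        have hset : {x : V | x ∈ p} = ↑p.toFinset := by ext; simp
        rw [hset, Set.ncard_coe_finset]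
        exact p.toFinset_card_le
      have h3 := Set.ncard_le_ncard hsub (Set.toFinite _)
      omega

lemma indexOf_lt_of_mem_take [DecidableEq V] :
    ∀ (l : List V) (k : ℕ) (x : V), x ∈ l.take k → l.idxOf x < k := by
  intro l
  induction l with
  | nil => simp
  | cons a t ih =>
    intro k x hx
    cases k with
    | zero => simp at hx
    | succ k =>
      rw [List.take_succ_cons] at hx
      rcases List.mem_cons.mp hx with rfl | hx'
      · simp
      · by_cases hxa : x = a
        · simp [hxa]
        · rw [List.idxOf_cons_ne _ (fun hax => hxa hax.symm)]
          exact Nat.succ_lt_succ (ih k x hx')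

lemma le_indexOf_of_mem_drop [DecidableEq V] {l : List V} (hnd : l.Nodup) {y : V} {k : ℕ}
    (hy : y ∈ l.drop k) : k ≤ l.idxOf y := by
  by_contra hlt
  push_neg at hlt
  have hyl : y ∈ l := (List.drop_sublist _ _).subset hy
  have hidx : l.idxOf y < l.length := List.idxOf_lt_length_iff.mpr hyl
  have hytake : y ∈ l.take k := by
    have h1 : l.idxOf y < (l.take k).length := by simp; omega
    have h2 : (l.take k)[l.idxOf y] = l[l.idxOf y] := List.getElem_take
    have h3 : l[l.idxOf y]'hidx = y := by
      have := List.idxOf_get (a := y) (l := l) hidx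
      simpa using this
    rw [← h3, ← h2]
    exact List.getElem_mem h1
  have hdisj : (l.take k).Disjoint (l.drop k) := by
    apply List.disjoint_of_nodup_append
    rw [List.take_append_drop]
    exact hnd
  exact hdisj hytake hy

lemma paths_family [Fintype V] [DecidableEq V] {D : V → V → Prop} {k : ℕ} (hk : 1 ≤ k)
    (h : IsKStrong D (2 * k ^ 2)) :
    ∃ P : Fin k → List V, (∀ i, IsPathList D (P i) ∧ (P i).length = 2 * k) ∧
      (∀ i j, i ≠ j → ∀ x ∈ P i, x ∉ P j) := by
  suffices haux : ∀ n : ℕ, n ≤ k → ∃ P : Fin n → List V,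
      (∀ i, IsPathList D (P i) ∧ (P i).length = 2 * k) ∧
      (∀ i j, i ≠ j → ∀ x ∈ P i, x ∉ P j) from haux k le_rfl
  intro n hn
  induction n with
  | zero => exact ⟨fun i => [], fun i => i.elim0, fun i => i.elim0⟩
  | succ n ih =>
    obtain ⟨P, hP, hPdisj⟩ := ih (by omega)
    set T : Finset V := Finset.univ.biUnion (fun i : Fin n => (P i).toFinset) with hTdef
    have hTcard : T.card ≤ 2 * k * n := by
      calc T.card ≤ ∑ i : Fin n, (P i).toFinset.card := Finset.card_biUnion_le
        _ ≤ ∑ _i : Fin n, 2 * k := Finset.sum_le_sum (fun i _ => by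
            rw [List.toFinset_card_of_nodup (hP i).1.2.1, (hP i).2])
        _ = 2 * k * n := by simp [mul_comm]
    have hTbound : T.card + 2 * k ≤ 2 * k ^ 2 := by nlinarith
    have hTlt : T.card < 2 * k ^ 2 := by omega
    have hdeg : ∀ v : V, v ∉ T → 2 * k ≤ {w : V | w ∉ T ∧ w ≠ v ∧ D v w}.ncard := by
      intro v hv
      have h1 := outdeg_of_strong h T hTlt hv
      omega
    have hv0 : ∃ v0 : V, v0 ∉ T := by
      by_contra hc
      push_neg at hc
      have hsub : (Finset.univ : Finset V) ⊆ T := fun z _ => hc z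
      have h2 := Finset.card_le_card hsub
      rw [Finset.card_univ] at h2
      have h3 := h.1
      omega
    obtain ⟨v0, hv0⟩ := hv0
    obtain ⟨q, hq, hqT, hqlen⟩ := long_path T (2 * k) hdeg hv0
    have hqlenpos : 0 < q.length := List.length_pos_iff.mpr hq.1
    set q' := q.take (2 * k) with hq'def
    have hq'path : IsPathList D q' :=
      ⟨List.ne_nil_of_length_pos (by simp [hq'def]; omega),
        (List.take_sublist _ _).nodup hq.2.1, hq.2.2.take _⟩
    have hq'len : q'.length = 2 * k := by simp [hq'def]; omega
    have hq'T : ∀ x ∈ q', x ∉ T := fun x hx => hqT x ((List.take_sublist _ _).subset hx)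
    refine ⟨Fin.snoc P q', ?_, ?_⟩
    · intro i
      refine Fin.lastCases ?_ ?_ i
      · rw [Fin.snoc_last]
        exact ⟨hq'path, hq'len⟩
      · intro j
        rw [Fin.snoc_castSucc]
        exact hP j
    · intro i j hij x hxi hxj
      have hmemT : ∀ (i' : Fin n) (z : V), z ∈ P i' → z ∈ T := by
        intro i' z hz
        rw [hTdef]
        exact Finset.mem_biUnion.mpr ⟨i', Finset.mem_univ _, List.mem_toFinset.mpr hz⟩
      rcases Fin.eq_castSucc_or_eq_last i with ⟨i', rfl⟩ | rfl <;>
        rcases Fin.eq_castSucc_or_eq_last j with ⟨j', rfl⟩ | rfl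
      · rw [Fin.snoc_castSucc] at hxi hxj
        exact hPdisj i' j' (fun hee => hij (by rw [hee])) x hxi hxj
      · rw [Fin.snoc_castSucc] at hxi
        rw [Fin.snoc_last] at hxj
        exact hq'T x hxj (hmemT i' x hxi)
      · rw [Fin.snoc_last] at hxi
        rw [Fin.snoc_castSucc] at hxj
        exact hq'T x hxi (hmemT j' x hxj)
      · exact hij rfl

end Aux

/-- For every `k ≥ 1`, every `2k²`-strong digraph contains a
`(k,k)`-path system. -/
theorem statement5 (k : ℕ) (hk : 1 ≤ k) (V : Type) [Fintype V] [DecidableEq V]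
    (D : V → V → Prop) (h : IsKStrong D (2 * k ^ 2)) :
    Nonempty (PathSystem D k k) := by
  obtain ⟨P, hP, hPdisj⟩ := paths_family hk h
  have hk2 : k ≤ 2 * k ^ 2 := by nlinarith
  set Ain : Fin k → Finset V := fun i => ((P i).take k).toFinset with hAindef
  set Aout : Fin k → Finset V := fun i => ((P i).drop k).toFinset with hAoutdef
  have htake_len : ∀ i, ((P i).take k).length = k := fun i => by simp [(hP i).2]; omega
  have hdrop_len : ∀ i, ((P i).drop k).length = k := fun i => by simp [(hP i).2]; omega
  have htake_nd : ∀ i, ((P i).take k).Nodup :=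
    fun i => (List.take_sublist _ _).nodup (hP i).1.2.1
  have hdrop_nd : ∀ i, ((P i).drop k).Nodup :=
    fun i => (List.drop_sublist _ _).nodup (hP i).1.2.1
  have hAin_card : ∀ i, (Ain i).card = k := fun i => by
    rw [hAindef, List.toFinset_card_of_nodup (htake_nd i), htake_len i]
  have hAout_card : ∀ i, (Aout i).card = k := fun i => by
    rw [hAoutdef, List.toFinset_card_of_nodup (hdrop_nd i), hdrop_len i]
  have hwl : ∀ (A : Finset V), A.card = k → WellLinked D A := by
    intro A hA X Y hXA hYA _hdisj hcard
    refine linkage_of_strong h X Y le_rfl hcard.le ?_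
    calc X.card ≤ A.card := Finset.card_le_card hXA
      _ = k := hA
      _ ≤ 2 * k ^ 2 := hk2
  have hlink : ∀ i j : Fin k, i ≠ j →
      ∃ L : Fin k → List V, IsLinkage D ↑(Aout i) ↑(Ain j) L := by
    intro i j _hij
    exact linkage_of_strong h (Aout i) (Ain j) (hAout_card i).ge (hAin_card j).ge hk2
  refine ⟨⟨Ain, Aout, hAin_card, hAout_card,
    fun i => hwl _ (hAin_card i), fun i => hwl _ (hAout_card i),
    fun i j => if hij : i ≠ j then Classical.choose (hlink i j hij) else fun _ => [],
    ?_, P, fun i => (hP i).1, hPdisj, ?_, ?_⟩⟩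
  · intro i j hij
    simp only [dif_pos hij]
    exact Classical.choose_spec (hlink i j hij)
  · intro i x hx
    rw [Finset.mem_union] at hx
    rcases hx with hx | hx
    · exact (List.take_sublist _ _).subset (List.mem_toFinset.mp hx)
    · exact (List.drop_sublist _ _).subset (List.mem_toFinset.mp hx)
  · intro i x hx y hy
    rw [hAindef, List.mem_toFinset] at hx
    rw [hAoutdef, List.mem_toFinset] at hy
    have h1 : (P i).idxOf x < k := indexOf_lt_of_mem_take (P i) k x hx
    have h2 : k ≤ (P i).idxOf y := le_indexOf_of_mem_drop (hP i).1.2.1 hy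
    omega
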